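/- arXiv:0708.3696 — 6 statements merged into one kernel-verified Lean document; each statement's English description precedes it below -/
import Mathlib

section
/- Let A be an m×n real matrix of rank ρ with thin SVD A = U_A Σ_A V_A^T, and let S be an r×m real matrix such that rank(S U_A) = ρ. Then (SA)⁺ = V_A Σ_A^{-1} (S U_A)⁺. -/
open Matrix BigOperators

noncomputable def frob {m n : ℕ} (A : Matrix (Fin m) (Fin n) ℝ) : ℝ :=
  Real.sqrt (∑ i, ∑ j, (A i j)^2)

noncomputable def spec {m n : ℕ} (A : Matrix (Fin m) (Fin n) ℝ) : ℝ :=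
  ‖LinearMap.toContinuousLinearMap (Matrix.toEuclideanLin A)‖

def IsMoorePenrose {m n : ℕ} (A : Matrix (Fin m) (Fin n) ℝ) (Ap : Matrix (Fin n) (Fin m) ℝ) : Prop :=
  A * Ap * A = A ∧ Ap * A * Ap = Ap ∧ (A * Ap)ᵀ = A * Ap ∧ (Ap * A)ᵀ = Ap * A

lemma mp_unique {m n : ℕ} {M : Matrix (Fin m) (Fin n) ℝ}
    {X Y : Matrix (Fin n) (Fin m) ℝ}
    (hX : IsMoorePenrose M X) (hY : IsMoorePenrose M Y) : X = Y := by
  obtain ⟨hX1, hX2, hX3, hX4⟩ := hX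
  obtain ⟨hY1, hY2, hY3, hY4⟩ := hY
  have e1 : M * X = M * Y := by
    calc M * X = (M * X)ᵀ := hX3.symm
      _ = Xᵀ * (M * Y * M)ᵀ := by rw [transpose_mul, hY1]
      _ = Xᵀ * (Mᵀ * (M * Y)ᵀ) := by rw [transpose_mul]
      _ = (Xᵀ * Mᵀ) * (M * Y) := by rw [hY3, ← Matrix.mul_assoc]
      _ = (M * X) * (M * Y) := by rw [← transpose_mul, hX3]
      _ = (M * X * M) * Y := by simp only [Matrix.mul_assoc]
      _ = M * Y := by rw [hX1]
  have e2 : X * M = Y * M := by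
    calc X * M = (X * M)ᵀ := hX4.symm
      _ = (M * Y * M)ᵀ * Xᵀ := by rw [transpose_mul, hY1]
      _ = ((Y * M)ᵀ * Mᵀ) * Xᵀ := by
            rw [show M * Y * M = M * (Y * M) from Matrix.mul_assoc _ _ _, transpose_mul]
      _ = (Y * M) * (Mᵀ * Xᵀ) := by rw [hY4, Matrix.mul_assoc]
      _ = (Y * M) * (X * M) := by rw [← transpose_mul, hX4]
      _ = Y * (M * X * M) := by simp only [Matrix.mul_assoc]
      _ = Y * M := by rw [hX1]
  calc X = X * M * X := hX2.symm
    _ = X * (M * Y) := by rw [Matrix.mul_assoc, e1]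
    _ = (Y * M) * Y := by rw [← Matrix.mul_assoc, e2]
    _ = Y := by rw [Matrix.mul_assoc, ← Matrix.mul_assoc, hY2]

/-- If `A = U Σ Vᵀ` is a thin SVD and `rank(SU) = ρ`, then `(SA)⁺ = V Σ⁻¹ (SU)⁺`. -/
theorem pinv_of_sampled {m n r ρ : ℕ}
    (A : Matrix (Fin m) (Fin n) ℝ)
    (U : Matrix (Fin m) (Fin ρ) ℝ) (V : Matrix (Fin n) (Fin ρ) ℝ) (σ : Fin ρ → ℝ)
    (S : Matrix (Fin r) (Fin m) ℝ)
    (hU : Uᵀ * U = 1) (hV : Vᵀ * V = 1) (hσ : ∀ i, 0 < σ i)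
    (hA : A = U * Matrix.diagonal σ * Vᵀ) (hrA : A.rank = ρ)
    (hrank : (S * U).rank = ρ)
    (SAp : Matrix (Fin n) (Fin r) ℝ) (SUp : Matrix (Fin ρ) (Fin r) ℝ)
    (hSAp : IsMoorePenrose (S * A) SAp) (hSUp : IsMoorePenrose (S * U) SUp) :
    SAp = V * Matrix.diagonal (fun i => (σ i)⁻¹) * SUp := by
  set B := S * U with hB
  obtain ⟨hB1, hB2, hB3, hB4⟩ := hSUp
  -- Step 1: SUp * B = 1
  have hP1 : SUp * B = 1 := by
    have hidem : (SUp * B) * (SUp * B) = SUp * B := by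
      rw [Matrix.mul_assoc SUp B, ← Matrix.mul_assoc B SUp B, hB1]
    have hBP : B * (SUp * B) = B := by rw [← Matrix.mul_assoc, hB1]
    have hrankP : (SUp * B).rank = ρ := by
      have h1 : (SUp * B).rank ≤ ρ := (SUp * B).rank_le_width
      have h2 : ρ ≤ (SUp * B).rank := by
        calc ρ = B.rank := hrank.symm
          _ = (B * (SUp * B)).rank := by rw [hBP]
          _ ≤ (SUp * B).rank := Matrix.rank_mul_le_right B (SUp * B)
      omega
    have hsurj : Function.Surjective (SUp * B).mulVecLin := by
      rw [← LinearMap.range_eq_top]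
      apply Submodule.eq_top_of_finrank_eq
      rw [show Module.finrank ℝ (LinearMap.range (SUp * B).mulVecLin)
          = (SUp * B).rank from rfl, hrankP]
      simp [Module.finrank_pi]
    have hvec : ∀ v, (SUp * B) *ᵥ v = v := by
      intro v
      obtain ⟨x, hx⟩ := hsurj v
      have h3 : (SUp * B) *ᵥ ((SUp * B) *ᵥ x) = (SUp * B) *ᵥ x := by
        rw [Matrix.mulVec_mulVec, hidem]
      rw [Matrix.mulVecLin_apply] at hx
      rw [← hx, h3]
    ext i j
    have := congrFun (hvec (Pi.single j 1)) i
    simpa [Matrix.mulVec_single, Matrix.one_apply, Pi.single_apply, eq_comm] using this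
  -- diagonal facts
  have hσne : ∀ i, σ i ≠ 0 := fun i => (hσ i).ne'
  have hDD' : Matrix.diagonal σ * Matrix.diagonal (fun i => (σ i)⁻¹) = 1 := by
    rw [Matrix.diagonal_mul_diagonal]
    simp [mul_inv_cancel₀, hσne, Matrix.diagonal_one]
  have hD'D : Matrix.diagonal (fun i => (σ i)⁻¹) * Matrix.diagonal σ = 1 := by
    rw [Matrix.diagonal_mul_diagonal]
    simp [inv_mul_cancel₀, hσne, Matrix.diagonal_one]
  -- SA = B * (D * Vᵀ)
  have hSA : S * A = B * (Matrix.diagonal σ * Vᵀ) := by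
    rw [hA, hB]
    simp only [Matrix.mul_assoc]
  set D := Matrix.diagonal σ
  set D' := Matrix.diagonal (fun i => (σ i)⁻¹)
  set C := V * D' * SUp with hC
  -- key products
  have hMC : (S * A) * C = B * SUp := by
    rw [hSA, hC]
    calc B * (D * Vᵀ) * (V * D' * SUp)
        = B * (D * ((Vᵀ * V) * (D' * SUp))) := by
          simp only [Matrix.mul_assoc]
      _ = B * (D * (D' * SUp)) := by rw [hV, Matrix.one_mul]
      _ = B * (D * D' * SUp) := by rw [← Matrix.mul_assoc D D' SUp]
      _ = B * SUp := by rw [hDD', Matrix.one_mul]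
  have hCM : C * (S * A) = V * Vᵀ := by
    rw [hSA, hC]
    calc V * D' * SUp * (B * (D * Vᵀ))
        = V * (D' * ((SUp * B) * (D * Vᵀ))) := by simp only [Matrix.mul_assoc]
      _ = V * (D' * (D * Vᵀ)) := by rw [hP1, Matrix.one_mul]
      _ = V * (D' * D * Vᵀ) := by rw [← Matrix.mul_assoc D' D Vᵀ]
      _ = V * Vᵀ := by rw [hD'D, Matrix.one_mul]
  have hmp : IsMoorePenrose (S * A) C := by
    refine ⟨?_, ?_, ?_, ?_⟩
    · rw [hMC, hSA, ← Matrix.mul_assoc, hB1]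
    · rw [hCM, hC]
      calc V * Vᵀ * (V * D' * SUp) = V * ((Vᵀ * V) * (D' * SUp)) := by
            simp only [Matrix.mul_assoc]
        _ = V * D' * SUp := by rw [hV, Matrix.one_mul, Matrix.mul_assoc]
    · rw [hMC, hB3]
    · rw [hCM, transpose_mul, transpose_transpose]
  exact mp_unique hSAp hmp
end

section
/- Let A ∈ ℝ^{m×n} have rank ρ with thin SVD A = UΣV^T, let B ∈ ℝ^{m×p}, and let S ∈ ℝ^{r×m} be such that rank(SU) = ρ. Define X_opt = A⁺B and X̃ = (SA)⁺(SB). Then X_opt - X̃ = -V Σ^{-1} (SU)⁺ S (I_m - UU^T) B. -/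
open Matrix BigOperators

lemma idem_full_rank_eq_one {ρ : ℕ} (M : Matrix (Fin ρ) (Fin ρ) ℝ)
    (hidem : M * M = M) (h : M.rank = ρ) : M = 1 := by
  have hr : LinearMap.range M.mulVecLin = ⊤ := by
    apply Submodule.eq_top_of_finrank_eq
    rw [← Matrix.rank, h]
    simp
  have hsurj : Function.Surjective M.mulVec :=
    LinearMap.range_eq_top.mp hr
  have hfix : ∀ v, M.mulVec v = v := by
    intro v
    obtain ⟨x, hx⟩ := hsurj v
    calc M.mulVec v = M.mulVec (M.mulVec x) := by rw [hx]
    _ = (M * M).mulVec x := by rw [Matrix.mulVec_mulVec]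
    _ = v := by rw [hidem, hx]
  ext i j
  have := congrFun (hfix (Pi.single j 1)) i
  simp only [Matrix.mulVec_single, mul_one, MulOpposite.op_one, one_smul, Matrix.col_apply] at this
  simp [this, Matrix.one_apply, Pi.single_apply]

lemma mp_unique_s10 {m n : ℕ} (A : Matrix (Fin m) (Fin n) ℝ)
    (P Q : Matrix (Fin n) (Fin m) ℝ)
    (hP : IsMoorePenrose A P) (hQ : IsMoorePenrose A Q) : P = Q := by
  obtain ⟨hP1, hP2, hP3, hP4⟩ := hP
  obtain ⟨hQ1, hQ2, hQ3, hQ4⟩ := hQ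
  have hAP : A * P = A * Q := by
    calc A * P = (A * P)ᵀ := hP3.symm
    _ = Pᵀ * Aᵀ := by rw [Matrix.transpose_mul]
    _ = Pᵀ * (A * Q * A)ᵀ := by rw [hQ1]
    _ = Pᵀ * (Aᵀ * (A * Q)ᵀ) := by rw [Matrix.transpose_mul]
    _ = (Pᵀ * Aᵀ) * (A * Q) := by rw [hQ3]; simp [Matrix.mul_assoc]
    _ = (A * P)ᵀ * (A * Q) := by rw [Matrix.transpose_mul]
    _ = (A * P) * (A * Q) := by rw [hP3]
    _ = (A * P * A) * Q := by simp [Matrix.mul_assoc]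
    _ = A * Q := by rw [hP1]
  have hPA : P * A = Q * A := by
    calc P * A = (P * A)ᵀ := hP4.symm
    _ = Aᵀ * Pᵀ := by rw [Matrix.transpose_mul]
    _ = (A * Q * A)ᵀ * Pᵀ := by rw [hQ1]
    _ = (Aᵀ * (A * Q)ᵀ) * Pᵀ := by rw [Matrix.transpose_mul (A*Q) A]
    _ = ((Q * A)ᵀ * Aᵀ) * Pᵀ := by rw [Matrix.transpose_mul A Q, Matrix.transpose_mul Q A]; simp [Matrix.mul_assoc]
    _ = (Q * A) * (P * A)ᵀ := by rw [hQ4, Matrix.transpose_mul P A]; simp [Matrix.mul_assoc]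
    _ = (Q * A) * (P * A) := by rw [hP4]
    _ = Q * (A * P * A) := by simp [Matrix.mul_assoc]
    _ = Q * A := by rw [hP1]
  calc P = P * A * P := hP2.symm
  _ = Q * A * P := by rw [hPA]
  _ = Q * (A * P) := by simp [Matrix.mul_assoc]
  _ = Q * (A * Q) := by rw [hAP]
  _ = Q * A * Q := by simp [Matrix.mul_assoc]
  _ = Q := hQ2

/-- `X_opt - X̃ = -V Σ⁻¹ (SU)⁺ S (I - UUᵀ) B`. -/
theorem regression_solution_difference {m n p r ρ : ℕ}
    (A : Matrix (Fin m) (Fin n) ℝ) (B : Matrix (Fin m) (Fin p) ℝ)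
    (U : Matrix (Fin m) (Fin ρ) ℝ) (V : Matrix (Fin n) (Fin ρ) ℝ) (σ : Fin ρ → ℝ)
    (S : Matrix (Fin r) (Fin m) ℝ)
    (hU : Uᵀ * U = 1) (hV : Vᵀ * V = 1) (hσ : ∀ i, 0 < σ i)
    (hA : A = U * Matrix.diagonal σ * Vᵀ) (hrA : A.rank = ρ)
    (hrank : (S * U).rank = ρ)
    (SAp : Matrix (Fin n) (Fin r) ℝ) (SUp : Matrix (Fin ρ) (Fin r) ℝ)
    (hSAp : IsMoorePenrose (S * A) SAp) (hSUp : IsMoorePenrose (S * U) SUp) :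
    V * Matrix.diagonal (fun i => (σ i)⁻¹) * (Uᵀ * B) - SAp * (S * B) =
      -(V * Matrix.diagonal (fun i => (σ i)⁻¹) * (SUp * (S * ((1 - U * Uᵀ) * B)))) := by
  set D := Matrix.diagonal σ with hD
  set Dinv := Matrix.diagonal (fun i => (σ i)⁻¹) with hDinv
  set K := S * U with hK
  obtain ⟨hK1, hK2, hK3, hK4⟩ := hSUp
  have hDDinv : D * Dinv = 1 := by
    rw [hD, hDinv, Matrix.diagonal_mul_diagonal]
    rw [show (fun i => σ i * (σ i)⁻¹) = fun _ => (1:ℝ) from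
      funext fun i => mul_inv_cancel₀ (hσ i).ne']
    exact Matrix.diagonal_one
  have hDinvD : Dinv * D = 1 := by
    rw [hD, hDinv, Matrix.diagonal_mul_diagonal]
    rw [show (fun i => (σ i)⁻¹ * σ i) = fun _ => (1:ℝ) from
      funext fun i => inv_mul_cancel₀ (hσ i).ne']
    exact Matrix.diagonal_one
  -- SUp * K = 1
  have hMone : SUp * K = 1 := by
    apply idem_full_rank_eq_one
    · calc SUp * K * (SUp * K) = (SUp * K * SUp) * K := by
            simp [Matrix.mul_assoc]
      _ = SUp * K := by rw [hK2]
    · refine le_antisymm ?_ ?_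
      · calc (SUp * K).rank ≤ Fintype.card (Fin ρ) := Matrix.rank_le_card_width _
        _ = ρ := by simp
      · calc ρ = K.rank := hrank.symm
        _ = (K * (SUp * K)).rank := by rw [← Matrix.mul_assoc, hK1]
        _ ≤ (SUp * K).rank := Matrix.rank_mul_le_right _ _
  have hSA : S * A = K * D * Vᵀ := by rw [hA, hK]; simp [Matrix.mul_assoc]
  -- the candidate pseudoinverse of S*A
  have hcand : IsMoorePenrose (S * A) (V * Dinv * SUp) := by
    rw [hSA]
    refine ⟨?_, ?_, ?_, ?_⟩
    · calc K * D * Vᵀ * (V * Dinv * SUp) * (K * D * Vᵀ)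
          = K * D * (Vᵀ * V) * (Dinv * ((SUp * K) * (D * Vᵀ))) := by
            simp [Matrix.mul_assoc]
      _ = K * (D * Dinv) * (D * Vᵀ) := by rw [hV, hMone]; simp [Matrix.mul_assoc]
      _ = K * D * Vᵀ := by rw [hDDinv]; simp [Matrix.mul_assoc]
    · calc V * Dinv * SUp * (K * D * Vᵀ) * (V * Dinv * SUp)
          = V * Dinv * ((SUp * K) * (D * ((Vᵀ * V) * (Dinv * SUp)))) := by
            simp [Matrix.mul_assoc]
      _ = V * (Dinv * D) * (Dinv * SUp) := by rw [hV, hMone]; simp [Matrix.mul_assoc]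
      _ = V * Dinv * SUp := by rw [hDinvD]; simp [Matrix.mul_assoc]
    · have h1 : K * D * Vᵀ * (V * Dinv * SUp) = K * SUp := by
        calc K * D * Vᵀ * (V * Dinv * SUp) = K * (D * ((Vᵀ * V) * (Dinv * SUp))) := by
              simp [Matrix.mul_assoc]
        _ = K * ((D * Dinv) * SUp) := by rw [hV]; simp [Matrix.mul_assoc]
        _ = K * SUp := by rw [hDDinv]; simp
      rw [h1]; exact hK3
    · have h1 : V * Dinv * SUp * (K * D * Vᵀ) = V * Vᵀ := by
        calc V * Dinv * SUp * (K * D * Vᵀ) = V * (Dinv * ((SUp * K) * (D * Vᵀ))) := by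
              simp [Matrix.mul_assoc]
        _ = V * ((Dinv * D) * Vᵀ) := by rw [hMone]; simp [Matrix.mul_assoc]
        _ = V * Vᵀ := by rw [hDinvD]; simp
      rw [h1, Matrix.transpose_mul, Matrix.transpose_transpose]
  have hSApEq : SAp = V * Dinv * SUp := mp_unique_s10 (S * A) _ _ hSAp hcand
  rw [hSApEq]
  have hexp : S * ((1 - U * Uᵀ) * B) = S * B - K * (Uᵀ * B) := by
    rw [Matrix.sub_mul, Matrix.one_mul, Matrix.mul_sub, hK]
    simp [Matrix.mul_assoc]
  rw [hexp, Matrix.mul_sub SUp, ← Matrix.mul_assoc SUp K, hMone, Matrix.one_mul,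
    Matrix.mul_sub, neg_sub]
  simp [Matrix.mul_assoc]
end

section
/- Let A ∈ ℝ^{m×n} have rank ρ with thin SVD A = UΣV^T, let B ∈ ℝ^{m×p}, and let S ∈ ℝ^{r×m} with rank(SU) = ρ. Set Z = ‖(I - UU^T)B‖_F and Ω = (SU)⁺ - (SU)^T. Then ‖B - A(SA)⁺SB‖_F ≤ Z + ‖U^T S^T S (I - UU^T) B‖_F + ‖Ω‖_2 · ‖S(I - UU^T)B‖_F. -/
open Matrix BigOperators

lemma frob_eq_norm {m n : ℕ} (A : Matrix (Fin m) (Fin n) ℝ) :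
    frob A = ‖(WithLp.equiv 2 (Fin m × Fin n → ℝ)).symm (fun p => A p.1 p.2)‖ := by
  rw [EuclideanSpace.norm_eq, frob]
  congr 1
  rw [← Fintype.sum_prod_type']
  exact Finset.sum_congr rfl (fun p _ => by simp only [Real.norm_eq_abs, sq_abs]; rfl)

lemma frob_nonneg {m n : ℕ} (A : Matrix (Fin m) (Fin n) ℝ) : 0 ≤ frob A :=
  Real.sqrt_nonneg _

lemma frob_sub_le {m n : ℕ} (X Y : Matrix (Fin m) (Fin n) ℝ) :
    frob (X - Y) ≤ frob X + frob Y := by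
  rw [frob_eq_norm, frob_eq_norm, frob_eq_norm]
  have : ((WithLp.equiv 2 (Fin m × Fin n → ℝ)).symm (fun p => (X - Y) p.1 p.2)) =
      ((WithLp.equiv 2 (Fin m × Fin n → ℝ)).symm (fun p => X p.1 p.2)) -
      ((WithLp.equiv 2 (Fin m × Fin n → ℝ)).symm (fun p => Y p.1 p.2)) := rfl
  rw [this]
  exact norm_sub_le _ _

lemma frob_add_le {m n : ℕ} (X Y : Matrix (Fin m) (Fin n) ℝ) :
    frob (X + Y) ≤ frob X + frob Y := by
  rw [frob_eq_norm, frob_eq_norm, frob_eq_norm]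
  exact norm_add_le ((WithLp.equiv 2 (Fin m × Fin n → ℝ)).symm (fun p => X p.1 p.2))
    ((WithLp.equiv 2 (Fin m × Fin n → ℝ)).symm (fun p => Y p.1 p.2))

lemma frob_sq_trace {m n : ℕ} (A : Matrix (Fin m) (Fin n) ℝ) :
    ∑ i, ∑ j, (A i j)^2 = (Aᵀ * A).trace := by
  rw [Matrix.trace, Finset.sum_comm]
  simp [Matrix.mul_apply, Matrix.diag, sq]

lemma frob_unitary {m k n : ℕ} (U : Matrix (Fin m) (Fin k) ℝ) (hU : Uᵀ * U = 1)
    (M : Matrix (Fin k) (Fin n) ℝ) : frob (U * M) = frob M := by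
  unfold frob
  rw [frob_sq_trace, frob_sq_trace]
  congr 2
  rw [Matrix.transpose_mul, Matrix.mul_assoc, ← Matrix.mul_assoc Uᵀ, hU, Matrix.one_mul]

lemma frob_mul_le {m k n : ℕ} (X : Matrix (Fin m) (Fin k) ℝ) (Y : Matrix (Fin k) (Fin n) ℝ) :
    frob (X * Y) ≤ spec X * frob Y := by
  have hs : 0 ≤ spec X := norm_nonneg _
  unfold frob
  rw [Finset.sum_comm]
  have key : ∀ j, ∑ i, ((X * Y) i j)^2 ≤ (spec X)^2 * ∑ i, (Y i j)^2 := by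
    intro j
    have h1 : ∑ i, ((X * Y) i j)^2 =
        ‖(Matrix.toEuclideanLin X) ((WithLp.equiv 2 (Fin k → ℝ)).symm (fun i => Y i j))‖^2 := by
      rw [WithLp.equiv_symm_apply, Matrix.toEuclideanLin_apply_piLp_toLp, EuclideanSpace.norm_eq,
        Real.sq_sqrt (by positivity)]
      congr 1; ext i
      simp [Real.norm_eq_abs, sq_abs, Matrix.mul_apply, Matrix.mulVec, dotProduct]
    have h2 : ‖(Matrix.toEuclideanLin X) ((WithLp.equiv 2 (Fin k → ℝ)).symm (fun i => Y i j))‖ ≤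
        spec X * ‖(WithLp.equiv 2 (Fin k → ℝ)).symm (fun i => Y i j)‖ := by
      have := (LinearMap.toContinuousLinearMap (Matrix.toEuclideanLin X)).le_opNorm
        ((WithLp.equiv 2 (Fin k → ℝ)).symm (fun i => Y i j))
      simpa [spec] using this
    have h3 : ‖(WithLp.equiv 2 (Fin k → ℝ)).symm (fun i => Y i j)‖^2 = ∑ i, (Y i j)^2 := by
      rw [EuclideanSpace.norm_eq, Real.sq_sqrt (by positivity)]
      congr 1; ext i; simp [Real.norm_eq_abs, sq_abs]
    calc ∑ i, ((X * Y) i j)^2 = _ := h1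
      _ ≤ (spec X * ‖(WithLp.equiv 2 (Fin k → ℝ)).symm (fun i => Y i j)‖)^2 := by
          apply sq_le_sq' _ h2
          nlinarith [norm_nonneg ((Matrix.toEuclideanLin X) ((WithLp.equiv 2 (Fin k → ℝ)).symm (fun i => Y i j))), mul_nonneg hs (norm_nonneg ((WithLp.equiv 2 (Fin k → ℝ)).symm (fun i => Y i j)))]
      _ = (spec X)^2 * ∑ i, (Y i j)^2 := by rw [mul_pow, h3]
  calc Real.sqrt (∑ j, ∑ i, ((X * Y) i j)^2)
      ≤ Real.sqrt ((spec X)^2 * ∑ j, ∑ i, (Y i j)^2) := by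
        apply Real.sqrt_le_sqrt
        rw [Finset.mul_sum]
        exact Finset.sum_le_sum (fun j _ => key j)
    _ = spec X * Real.sqrt (∑ j, ∑ i, (Y i j)^2) := by
        rw [Real.sqrt_mul (by positivity), Real.sqrt_sq hs]
    _ = spec X * Real.sqrt (∑ i, ∑ j, (Y i j)^2) := by rw [Finset.sum_comm]

lemma full_rank_pinv_mul {r ρ : ℕ} {N : Matrix (Fin r) (Fin ρ) ℝ}
    {Np : Matrix (Fin ρ) (Fin r) ℝ} (hN : N.rank = ρ) (h : IsMoorePenrose N Np) :
    Np * N = 1 := by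
  have hinj : Function.Injective N.mulVec := by
    have hker : LinearMap.ker N.mulVecLin = ⊥ := by
      have hrn := LinearMap.finrank_range_add_finrank_ker N.mulVecLin
      rw [show Module.finrank ℝ (Fin ρ → ℝ) = ρ by simp] at hrn
      rw [Matrix.rank] at hN
      have : Module.finrank ℝ (LinearMap.ker N.mulVecLin) = 0 := by omega
      exact Submodule.finrank_eq_zero.mp this
    intro x y hxy
    exact (LinearMap.ker_eq_bot.mp hker) (show N.mulVecLin x = N.mulVecLin y from hxy)
  have h1 : N * (Np * N) = N := by rw [← Matrix.mul_assoc, h.1]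
  have hx : ∀ x, (Np * N) *ᵥ x = x := by
    intro x
    apply hinj
    rw [Matrix.mulVec_mulVec, h1]
  ext i j
  have := congrFun (hx (Pi.single j 1)) i
  simpa [Matrix.mulVec_single, Matrix.one_apply, Pi.single_apply] using this

/-- Triangle-inequality bound on the sampled regression residual:
`‖B - A(SA)⁺SB‖_F ≤ Z + ‖UᵀSᵀS(I-UUᵀ)B‖_F + ‖Ω‖_2 ‖S(I-UUᵀ)B‖_F`. -/
theorem regression_residual_bound {m n p r ρ : ℕ}
    (A : Matrix (Fin m) (Fin n) ℝ) (B : Matrix (Fin m) (Fin p) ℝ)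
    (U : Matrix (Fin m) (Fin ρ) ℝ) (V : Matrix (Fin n) (Fin ρ) ℝ) (σ : Fin ρ → ℝ)
    (S : Matrix (Fin r) (Fin m) ℝ)
    (hU : Uᵀ * U = 1) (hV : Vᵀ * V = 1) (hσ : ∀ i, 0 < σ i)
    (hA : A = U * Matrix.diagonal σ * Vᵀ) (hrA : A.rank = ρ)
    (hrank : (S * U).rank = ρ)
    (SAp : Matrix (Fin n) (Fin r) ℝ) (SUp : Matrix (Fin ρ) (Fin r) ℝ)
    (hSAp : IsMoorePenrose (S * A) SAp) (hSUp : IsMoorePenrose (S * U) SUp) :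
    frob (B - A * (SAp * (S * B))) ≤
      frob ((1 - U * Uᵀ) * B)
        + frob (Uᵀ * Sᵀ * (S * ((1 - U * Uᵀ) * B)))
        + spec (SUp - (S * U)ᵀ) * frob (S * ((1 - U * Uᵀ) * B)) := by
  set D := Matrix.diagonal σ with hD
  set D' := Matrix.diagonal (fun i => (σ i)⁻¹) with hD'
  have hDD' : D * D' = 1 := by
    rw [hD, hD', Matrix.diagonal_mul_diagonal]
    convert Matrix.diagonal_one with i
    exact mul_inv_cancel₀ (hσ i).ne'
  have hD'D : D' * D = 1 := by
    rw [hD, hD', Matrix.diagonal_mul_diagonal]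
    convert Matrix.diagonal_one with i
    exact inv_mul_cancel₀ (hσ i).ne'
  have hNpN : SUp * (S * U) = 1 := full_rank_pinv_mul hrank hSUp
  -- cancellation helpers
  have cV : ∀ {q : ℕ} (W : Matrix (Fin ρ) (Fin q) ℝ), Vᵀ * (V * W) = W := by
    intro q W; rw [← Matrix.mul_assoc, hV, Matrix.one_mul]
  have cD : ∀ {q : ℕ} (W : Matrix (Fin ρ) (Fin q) ℝ), D * (D' * W) = W := by
    intro q W; rw [← Matrix.mul_assoc, hDD', Matrix.one_mul]
  have cD' : ∀ {q : ℕ} (W : Matrix (Fin ρ) (Fin q) ℝ), D' * (D * W) = W := by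
    intro q W; rw [← Matrix.mul_assoc, hD'D, Matrix.one_mul]
  have cN : ∀ {q : ℕ} (W : Matrix (Fin ρ) (Fin q) ℝ), SUp * (S * (U * W)) = W := by
    intro q W
    rw [← Matrix.mul_assoc, ← Matrix.mul_assoc, Matrix.mul_assoc SUp S U, hNpN, Matrix.one_mul]
  -- the candidate pseudoinverse of S*A
  have hcand : IsMoorePenrose (S * A) (V * D' * SUp) := by
    obtain ⟨h1, h2, h3, h4⟩ := hSUp
    have hMX : (S * A) * (V * D' * SUp) = (S * U) * SUp := by
      rw [hA]; simp only [Matrix.mul_assoc, cV, cD]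
    have hXM : (V * D' * SUp) * (S * A) = V * Vᵀ := by
      rw [hA]; simp only [Matrix.mul_assoc, cN, cD']
    refine ⟨?_, ?_, ?_, ?_⟩
    · rw [hMX, hA]; simp only [Matrix.mul_assoc, cN]
    · rw [hXM]; simp only [Matrix.mul_assoc, cV]
    · rw [hMX]; exact h3
    · rw [hXM, Matrix.transpose_mul, Matrix.transpose_transpose]
  -- identify SAp and reduce A (SA)⁺ S B
  have hSApEq : SAp = V * D' * SUp := mp_unique hSAp hcand
  set E : Matrix (Fin m) (Fin p) ℝ := (1 - U * Uᵀ) * B with hEdef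
  have hE : E = B - U * (Uᵀ * B) := by
    rw [hEdef, Matrix.sub_mul, Matrix.one_mul, Matrix.mul_assoc]
  have hred : A * (SAp * (S * B)) = U * (SUp * (S * B)) := by
    rw [hSApEq, hA]; simp only [Matrix.mul_assoc, cV, cD]
  have h5 : U * (SUp * (S * E)) = U * (SUp * (S * B)) - U * (Uᵀ * B) := by
    rw [hE, Matrix.mul_sub, Matrix.mul_sub, Matrix.mul_sub, cN]
  have key : B - A * (SAp * (S * B)) = E - U * (SUp * (S * E)) := by
    rw [hred, h5, hE]; abel
  -- split SUp = Ω + Uᵀ Sᵀ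
  set Ω := SUp - (S * U)ᵀ with hΩ
  have hsplit : U * (SUp * (S * E)) = U * (Uᵀ * Sᵀ * (S * E)) + U * (Ω * (S * E)) := by
    have : SUp = Uᵀ * Sᵀ + Ω := by
      rw [hΩ, Matrix.transpose_mul]; abel
    rw [this, Matrix.add_mul, Matrix.mul_add]
  -- assemble the bound
  have t1 : frob (E - U * (SUp * (S * E))) ≤ frob E + frob (U * (SUp * (S * E))) :=
    frob_sub_le _ _
  have t2 : frob (U * (SUp * (S * E))) ≤
      frob (Uᵀ * Sᵀ * (S * E)) + spec Ω * frob (S * E) := by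
    rw [hsplit]
    calc frob (U * (Uᵀ * Sᵀ * (S * E)) + U * (Ω * (S * E)))
        ≤ frob (U * (Uᵀ * Sᵀ * (S * E))) + frob (U * (Ω * (S * E))) := frob_add_le _ _
      _ = frob (Uᵀ * Sᵀ * (S * E)) + frob (Ω * (S * E)) := by
          rw [frob_unitary U hU, frob_unitary U hU]
      _ ≤ frob (Uᵀ * Sᵀ * (S * E)) + spec Ω * frob (S * E) := by
          gcongr
          exact frob_mul_le _ _
  rw [key]
  linarith
end

section
/- Let A ∈ ℝ^{m×n}, B ∈ ℝ^{n×p}, let {p_j}_{j=1}^n be strictly positive numbers summing to 1, and let c ≥ 1 be an integer. For each j ∈ [n] independently, include the rank-one term A^{(j)}B_{(j)} scaled by 1/min{1, c·p_j} with probability min{1, c·p_j} (and omit it otherwise); let CR denote the sum of the included scaled terms. Then E[‖AB - CR‖_F²] ≤ (1/c) Σ_{j=1}^n ‖A^{(j)}‖² ‖B_{(j)}‖² / p_j. -/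
open Matrix BigOperators

open Finset in

lemma bern_key {n : ℕ} (q a : Fin n → ℝ) (hq0 : ∀ j, q j ≠ 0) (j k : Fin n) :
    ∑ I : Fin n → Bool, (∏ j', if I j' then q j' else 1 - q j') *
      ((a j - if I j then (q j)⁻¹ * a j else 0) *
       (a k - if I k then (q k)⁻¹ * a k else 0))
    = if j = k then (a j)^2 * ((q j)⁻¹ - 1) else 0 := by
  set h : Fin n → Bool → ℝ := fun j' b =>
    (if b then q j' else 1 - q j') *
    ((if j' = j then (a j - if b then (q j)⁻¹ * a j else 0) else 1) *
     (if j' = k then (a k - if b then (q k)⁻¹ * a k else 0) else 1)) with hh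
  have step1 : ∀ I : Fin n → Bool,
      (∏ j', if I j' then q j' else 1 - q j') *
        ((a j - if I j then (q j)⁻¹ * a j else 0) *
         (a k - if I k then (q k)⁻¹ * a k else 0))
      = ∏ j', h j' (I j') := by
    intro I
    simp only [hh, Finset.prod_mul_distrib, Finset.prod_ite_eq', Finset.mem_univ, if_true]
  rw [Finset.sum_congr rfl (fun I _ => step1 I), ← Fintype.prod_sum h]
  rcases eq_or_ne j k with rfl | hjk
  · simp only [if_pos rfl]
    rw [Finset.prod_eq_single j]
    · simp only [hh, Fintype.sum_bool, if_pos rfl, if_true, Bool.false_eq_true, if_false]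
      have := hq0 j
      field_simp
      ring
    · intro b _ hb
      simp only [hh, Fintype.sum_bool, if_neg hb]
      norm_num
    · simp
  · rw [if_neg hjk]
    apply Finset.prod_eq_zero (Finset.mem_univ j)
    simp only [hh, Fintype.sum_bool, if_pos rfl, if_neg hjk, if_true, Bool.false_eq_true, if_false]
    have := hq0 j
    field_simp
    ring

lemma bern_expect {n : ℕ} (q a : Fin n → ℝ) (hq0 : ∀ j, q j ≠ 0) :
    ∑ I : Fin n → Bool, (∏ j', if I j' then q j' else 1 - q j') *
      (∑ j, (a j - if I j then (q j)⁻¹ * a j else 0))^2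
    = ∑ j, (a j)^2 * ((q j)⁻¹ - 1) := by
  have e1 : ∑ I : Fin n → Bool, (∏ j', if I j' then q j' else 1 - q j') *
      (∑ j, (a j - if I j then (q j)⁻¹ * a j else 0))^2
      = ∑ j, ∑ k, ∑ I : Fin n → Bool, (∏ j', if I j' then q j' else 1 - q j') *
        ((a j - if I j then (q j)⁻¹ * a j else 0) *
         (a k - if I k then (q k)⁻¹ * a k else 0)) := by
    simp_rw [sq, Finset.sum_mul_sum, Finset.mul_sum]
    rw [Finset.sum_comm]
    exact Finset.sum_congr rfl fun j _ => Finset.sum_comm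
  rw [e1]
  simp_rw [bern_key q a hq0]
  simp

/-- Expected squared Frobenius error of the Bernoulli-sampling matrix multiplication
(the `Expected(c)` algorithm): `E[‖AB - CR‖_F²] ≤ (1/c) Σ_j ‖A^{(j)}‖²‖B_{(j)}‖²/p_j`. -/
theorem expected_c_matrix_mult_error {m n p : ℕ}
    (A : Matrix (Fin m) (Fin n) ℝ) (B : Matrix (Fin n) (Fin p) ℝ)
    (pr : Fin n → ℝ) (hpos : ∀ j, 0 < pr j) (hsum : ∑ j, pr j = 1)
    (c : ℕ) (hc : 1 ≤ c) :
    ∑ I : Fin n → Bool,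
        (∏ j, if I j then min 1 (c * pr j) else 1 - min 1 (c * pr j)) *
          (∑ i, ∑ l, ((A * B) i l -
              ∑ j, (if I j then (min 1 (c * pr j))⁻¹ * (A i j * B j l) else 0))^2) ≤
      (1 / (c : ℝ)) * ∑ j, (∑ i, (A i j)^2) * (∑ l, (B j l)^2) / pr j := by
  have hcpos : (0:ℝ) < c := by exact_mod_cast Nat.lt_of_lt_of_le Nat.zero_lt_one hc
  have hcp : ∀ j, (0:ℝ) < (c:ℝ) * pr j := fun j => mul_pos hcpos (hpos j)
  set q : Fin n → ℝ := fun j => min 1 ((c:ℝ) * pr j) with hqdef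
  have hqpos : ∀ j, 0 < q j := fun j => lt_min one_pos (hcp j)
  have hq0 : ∀ j, q j ≠ 0 := fun j => (hqpos j).ne'
  have e1 : ∑ I : Fin n → Bool,
        (∏ j, if I j then q j else 1 - q j) *
          (∑ i, ∑ l, ((A * B) i l -
              ∑ j, (if I j then (q j)⁻¹ * (A i j * B j l) else 0))^2)
      = ∑ i, ∑ l, ∑ I : Fin n → Bool,
        (∏ j, if I j then q j else 1 - q j) *
          (((A * B) i l - ∑ j, (if I j then (q j)⁻¹ * (A i j * B j l) else 0))^2) := by
    simp_rw [Finset.mul_sum]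
    rw [Finset.sum_comm]
    exact Finset.sum_congr rfl fun i _ => Finset.sum_comm
  have e2 : ∀ i l, ∑ I : Fin n → Bool,
        (∏ j, if I j then q j else 1 - q j) *
          (((A * B) i l - ∑ j, (if I j then (q j)⁻¹ * (A i j * B j l) else 0))^2)
      = ∑ j, (A i j * B j l)^2 * ((q j)⁻¹ - 1) := by
    intro i l
    rw [← bern_expect q (fun j => A i j * B j l) hq0]
    simp_rw [Matrix.mul_apply, ← Finset.sum_sub_distrib]
  rw [e1]
  simp_rw [e2]
  have e3 : ∑ i, ∑ l, ∑ j, (A i j * B j l)^2 * ((q j)⁻¹ - 1)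
      = ∑ j, ∑ i, ∑ l, (A i j * B j l)^2 * ((q j)⁻¹ - 1) := by
    rw [show (∑ i, ∑ l, ∑ j, (A i j * B j l)^2 * ((q j)⁻¹ - 1))
        = ∑ i, ∑ j, ∑ l, (A i j * B j l)^2 * ((q j)⁻¹ - 1) from
      Finset.sum_congr rfl fun i _ => Finset.sum_comm, Finset.sum_comm]
  rw [e3, Finset.mul_sum]
  apply Finset.sum_le_sum
  intro j _
  have hS : ∑ i, ∑ l, (A i j * B j l)^2 = (∑ i, (A i j)^2) * (∑ l, (B j l)^2) := by
    rw [Finset.sum_mul_sum]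
    simp_rw [mul_pow]
  have hSnn : 0 ≤ ∑ i, ∑ l, (A i j * B j l)^2 := by positivity
  calc ∑ i, ∑ l, (A i j * B j l)^2 * ((q j)⁻¹ - 1)
      = (∑ i, ∑ l, (A i j * B j l)^2) * ((q j)⁻¹ - 1) := by
        simp_rw [← Finset.sum_mul]
    _ ≤ (∑ i, ∑ l, (A i j * B j l)^2) * ((c:ℝ) * pr j)⁻¹ := by
        apply mul_le_mul_of_nonneg_left _ hSnn
        rcases le_total 1 ((c:ℝ) * pr j) with h | h
        · rw [hqdef]
          simp only [min_eq_left h, inv_one, sub_self]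
          positivity
        · rw [hqdef]
          simp only [min_eq_right h]
          exact sub_le_self _ zero_le_one
    _ = 1 / (c:ℝ) * ((∑ i, (A i j)^2) * (∑ l, (B j l)^2) / pr j) := by
        rw [hS, mul_inv]
        field_simp
end

section
/- Let A ∈ ℝ^{m×n}, B ∈ ℝ^{n×p}, c ≥ 1 an integer, and β ∈ (0,1]. Suppose the probabilities {p_j} satisfy p_j ≥ β‖A^{(j)}‖‖B_{(j)}‖ / (Σ_k ‖A^{(k)}‖‖B_{(k)}‖) for all j with A^{(j)}B_{(j)} ≠ 0. If CR = Σ_{t=1}^c A^{(j_t)} B_{(j_t)}/(c p_{j_t}) where j_1,...,j_c are i.i.d. with Pr(j_t=j)=p_j, then E[‖AB - CR‖_F] ≤ ‖A‖_F ‖B‖_F / √(βc). -/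
open Matrix BigOperators

section AuxExp

variable {c n : ℕ} {pr : Fin n → ℝ}



lemma sum_prod_fn (g : Fin c → Fin n → ℝ) :
    ∑ f : Fin c → Fin n, ∏ t, g t (f t) = ∏ t, ∑ j, g t j :=
  (Fintype.prod_sum g).symm

lemma exp_one (hsum : ∑ j, pr j = 1) :
    ∑ f : Fin c → Fin n, ∏ t, pr (f t) = 1 := by
  rw [sum_prod_fn (fun _ j => pr j)]
  simp [hsum]

lemma exp_lin (hsum : ∑ j, pr j = 1) (h : Fin n → ℝ) (t₀ : Fin c) :
    ∑ f : Fin c → Fin n, (∏ t, pr (f t)) * h (f t₀) = ∑ j, pr j * h j := by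
  have key := sum_prod_fn (c := c) (fun t j => pr j * (if t = t₀ then h j else 1))
  have L : ∀ f : Fin c → Fin n,
      (∏ t, (pr (f t) * (if t = t₀ then h (f t) else 1)))
        = (∏ t, pr (f t)) * h (f t₀) := by
    intro f
    rw [Finset.prod_mul_distrib, Finset.prod_ite_eq' Finset.univ t₀ (fun t => h (f t))]
    simp
  have R : (∏ t : Fin c, ∑ j, pr j * (if t = t₀ then h j else 1))
      = ∑ j, pr j * h j := by
    have : ∀ t : Fin c, (∑ j, pr j * (if t = t₀ then h j else 1))
        = if t = t₀ then (∑ j, pr j * h j) else 1 := by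
      intro t
      by_cases ht : t = t₀ <;> simp [ht, hsum]
    rw [Finset.prod_congr rfl (fun t _ => this t),
      Finset.prod_ite_eq' Finset.univ t₀ (fun _ => ∑ j, pr j * h j)]
    simp
  calc ∑ f : Fin c → Fin n, (∏ t, pr (f t)) * h (f t₀)
      = ∑ f : Fin c → Fin n, ∏ t, (pr (f t) * (if t = t₀ then h (f t) else 1)) := by
        exact Finset.sum_congr rfl (fun f _ => (L f).symm)
    _ = ∑ j, pr j * h j := by rw [key, R]

lemma exp_pair (hsum : ∑ j, pr j = 1) (h : Fin n → ℝ) (t₀ s₀ : Fin c) :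
    ∑ f : Fin c → Fin n, (∏ t, pr (f t)) * (h (f t₀) * h (f s₀)) =
      if t₀ = s₀ then ∑ j, pr j * h j ^ 2 else (∑ j, pr j * h j) ^ 2 := by
  have key := sum_prod_fn (c := c)
    (fun t j => pr j * ((if t = t₀ then h j else 1) * (if t = s₀ then h j else 1)))
  have L : ∀ f : Fin c → Fin n,
      (∏ t, (pr (f t) * ((if t = t₀ then h (f t) else 1) * (if t = s₀ then h (f t) else 1))))
        = (∏ t, pr (f t)) * (h (f t₀) * h (f s₀)) := by
    intro f
    rw [Finset.prod_mul_distrib, Finset.prod_mul_distrib,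
      Finset.prod_ite_eq' Finset.univ t₀ (fun t => h (f t)),
      Finset.prod_ite_eq' Finset.univ s₀ (fun t => h (f t))]
    simp
  rw [Finset.sum_congr rfl (fun f _ => (L f).symm), key]
  by_cases hts : t₀ = s₀
  · subst hts
    have : ∀ t : Fin c, (∑ j, pr j * ((if t = t₀ then h j else 1) * (if t = t₀ then h j else 1)))
        = if t = t₀ then (∑ j, pr j * h j ^ 2) else 1 := by
      intro t
      by_cases ht : t = t₀
      · simp only [ht, if_pos]
        exact Finset.sum_congr rfl fun j _ => by ring
      · simp [ht, hsum]
    rw [Finset.prod_congr rfl (fun t _ => this t),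
      Finset.prod_ite_eq' Finset.univ t₀ (fun _ => ∑ j, pr j * h j ^ 2)]
    simp
  · have : ∀ t : Fin c, (∑ j, pr j * ((if t = t₀ then h j else 1) * (if t = s₀ then h j else 1)))
        = (if t = t₀ then (∑ j, pr j * h j) else 1) * (if t = s₀ then (∑ j, pr j * h j) else 1) := by
      intro t
      by_cases ht : t = t₀ <;> by_cases hs : t = s₀ <;> simp_all [hsum]
    rw [Finset.prod_congr rfl (fun t _ => this t), Finset.prod_mul_distrib,
      Finset.prod_ite_eq' Finset.univ t₀ (fun _ => ∑ j, pr j * h j),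
      Finset.prod_ite_eq' Finset.univ s₀ (fun _ => ∑ j, pr j * h j)]
    simp [hts, sq]

lemma exp_sq (hsum : ∑ j, pr j = 1) (h : Fin n → ℝ) :
    ∑ f : Fin c → Fin n, (∏ t, pr (f t)) * (∑ t, h (f t)) ^ 2 =
      c * (∑ j, pr j * h j ^ 2) + ((c : ℝ) ^ 2 - c) * (∑ j, pr j * h j) ^ 2 := by
  have expand : ∀ f : Fin c → Fin n,
      (∏ t, pr (f t)) * (∑ t, h (f t)) ^ 2
        = ∑ t : Fin c, ∑ s : Fin c, (∏ u, pr (f u)) * (h (f t) * h (f s)) := by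
    intro f
    rw [sq, Finset.sum_mul_sum, Finset.mul_sum]
    exact Finset.sum_congr rfl fun t _ => by rw [Finset.mul_sum]
  rw [Finset.sum_congr rfl (fun f _ => expand f), Finset.sum_comm]
  have swap : ∀ t : Fin c,
      ∑ f : Fin c → Fin n, ∑ s : Fin c, (∏ u, pr (f u)) * (h (f t) * h (f s))
        = ∑ s : Fin c, (if t = s then ∑ j, pr j * h j ^ 2 else (∑ j, pr j * h j) ^ 2) := by
    intro t
    rw [Finset.sum_comm]
    exact Finset.sum_congr rfl fun s _ => exp_pair hsum h t s
  rw [Finset.sum_congr rfl (fun t _ => swap t)]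
  have inner : ∀ t : Fin c,
      (∑ s : Fin c, (if t = s then ∑ j, pr j * h j ^ 2 else (∑ j, pr j * h j) ^ 2))
        = (∑ j, pr j * h j ^ 2) + ((c : ℝ) - 1) * (∑ j, pr j * h j) ^ 2 := by
    intro t
    have e : ∀ s : Fin c, (if t = s then (∑ j, pr j * h j ^ 2) else (∑ j, pr j * h j) ^ 2)
        = (∑ j, pr j * h j) ^ 2
          + (if t = s then (∑ j, pr j * h j ^ 2) - (∑ j, pr j * h j) ^ 2 else 0) := by
      intro s; split <;> ring
    rw [Finset.sum_congr rfl (fun s _ => e s), Finset.sum_add_distrib, Finset.sum_const,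
      Finset.sum_ite_eq, Finset.card_univ]
    simp [nsmul_eq_mul]
    ring
  rw [Finset.sum_congr rfl (fun t _ => inner t), Finset.sum_const, Finset.card_univ]
  simp [nsmul_eq_mul]
  ring

lemma exp_err (hsum : ∑ j, pr j = 1) (h : Fin n → ℝ) :
    ∑ f : Fin c → Fin n, (∏ t, pr (f t)) * (((c:ℝ) * ∑ j, pr j * h j) - ∑ t, h (f t)) ^ 2
      ≤ c * ∑ j, pr j * h j ^ 2 := by
  have e1 : ∑ f : Fin c → Fin n, (∏ t, pr (f t)) * (∑ t, h (f t))
      = (c : ℝ) * ∑ j, pr j * h j := by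
    calc ∑ f : Fin c → Fin n, (∏ t, pr (f t)) * (∑ t, h (f t))
        = ∑ f : Fin c → Fin n, ∑ t, (∏ u, pr (f u)) * h (f t) := by
          exact Finset.sum_congr rfl fun f _ => Finset.mul_sum _ _ _
      _ = ∑ t : Fin c, ∑ f : Fin c → Fin n, (∏ u, pr (f u)) * h (f t) := Finset.sum_comm
      _ = ∑ t : Fin c, ∑ j, pr j * h j := Finset.sum_congr rfl fun t _ => exp_lin hsum h t
      _ = (c : ℝ) * ∑ j, pr j * h j := by
          rw [Finset.sum_const, Finset.card_univ]; simp [nsmul_eq_mul]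
  have expand : ∀ f : Fin c → Fin n,
      (∏ t, pr (f t)) * (((c:ℝ) * ∑ j, pr j * h j) - ∑ t, h (f t)) ^ 2
        = ((c:ℝ) * ∑ j, pr j * h j) ^ 2 * (∏ t, pr (f t))
          + (-2 * ((c:ℝ) * ∑ j, pr j * h j)) * ((∏ t, pr (f t)) * (∑ t, h (f t)))
          + (∏ t, pr (f t)) * (∑ t, h (f t)) ^ 2 := by
    intro f; ring
  rw [Finset.sum_congr rfl (fun f _ => expand f), Finset.sum_add_distrib,
    Finset.sum_add_distrib, ← Finset.mul_sum, ← Finset.mul_sum, exp_one hsum, e1,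
    exp_sq hsum h]
  have hc0 : (0:ℝ) ≤ (c:ℝ) := Nat.cast_nonneg c
  nlinarith [sq_nonneg (∑ j, pr j * h j), mul_nonneg hc0 (sq_nonneg (∑ j, pr j * h j))]

end AuxExp

/-- Expected Frobenius error of the i.i.d. sampling matrix multiplication
(the `Exactly(c)` algorithm) with nearly optimal probabilities:
`E[‖AB - CR‖_F] ≤ ‖A‖_F ‖B‖_F / √(βc)`. -/
theorem exactly_c_matrix_mult_error {m n p : ℕ}
    (A : Matrix (Fin m) (Fin n) ℝ) (B : Matrix (Fin n) (Fin p) ℝ)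
    (pr : Fin n → ℝ) (hpos : ∀ j, 0 < pr j) (hsum : ∑ j, pr j = 1)
    (c : ℕ) (hc : 1 ≤ c) (β : ℝ) (hβ0 : 0 < β) (hβ1 : β ≤ 1)
    (hp : ∀ j, (∃ i l, A i j * B j l ≠ 0) →
      β * (Real.sqrt (∑ i, (A i j)^2) * Real.sqrt (∑ l, (B j l)^2)) /
        (∑ j', Real.sqrt (∑ i, (A i j')^2) * Real.sqrt (∑ l, (B j' l)^2)) ≤ pr j) :
    ∑ f : Fin c → Fin n, (∏ t, pr (f t)) *
        frob (A * B -
          ∑ t, Matrix.of (fun i l => ((c : ℝ) * pr (f t))⁻¹ * (A i (f t) * B (f t) l))) ≤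
      frob A * frob B / Real.sqrt (β * c) := by
  classical
  have hc0 : (0:ℝ) < (c:ℝ) := by exact_mod_cast Nat.lt_of_lt_of_le Nat.zero_lt_one hc
  set W : (Fin c → Fin n) → ℝ := fun f => ∏ t, pr (f t) with hWdef
  set D : (Fin c → Fin n) → Matrix (Fin m) (Fin p) ℝ := fun f =>
    A * B - ∑ t, Matrix.of (fun i l => ((c : ℝ) * pr (f t))⁻¹ * (A i (f t) * B (f t) l))
    with hDdef
  show ∑ f : Fin c → Fin n, W f * frob (D f) ≤ frob A * frob B / Real.sqrt (β * c)
  set sa : Fin n → ℝ := fun j => Real.sqrt (∑ i, (A i j)^2) with hsadef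
  set sb : Fin n → ℝ := fun j => Real.sqrt (∑ l, (B j l)^2) with hsbdef
  set S : ℝ := ∑ j', sa j' * sb j' with hSdef
  have hW0 : ∀ f, 0 ≤ W f := fun f => Finset.prod_nonneg fun t _ => (hpos _).le
  have hsumW : ∑ f : Fin c → Fin n, W f = 1 := exp_one hsum
  have hsa0 : ∀ j, 0 ≤ sa j := fun j => Real.sqrt_nonneg _
  have hsb0 : ∀ j, 0 ≤ sb j := fun j => Real.sqrt_nonneg _
  -- Step B : expected squared Frobenius norm bound
  have EB : ∑ f : Fin c → Fin n, W f * (frob (D f))^2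
      ≤ ∑ j, (sa j * sb j)^2 / ((c:ℝ) * pr j) := by
    have hfro2 : ∀ f, (frob (D f))^2 = ∑ i, ∑ l, (D f i l)^2 := by
      intro f
      rw [frob, Real.sq_sqrt]
      positivity
    have hentry : ∀ (f : Fin c → Fin n) i l, D f i l =
        ((c:ℝ) * ∑ j, pr j * (((c:ℝ) * pr j)⁻¹ * (A i j * B j l)))
          - ∑ t, ((c:ℝ) * pr (f t))⁻¹ * (A i (f t) * B (f t) l) := by
      intro f i l
      have hmulsum : (c:ℝ) * ∑ j, pr j * (((c:ℝ) * pr j)⁻¹ * (A i j * B j l))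
          = ∑ j, A i j * B j l := by
        rw [Finset.mul_sum]
        refine Finset.sum_congr rfl fun j _ => ?_
        have h1 : pr j ≠ 0 := (hpos j).ne'
        field_simp
      simp only [hDdef, Matrix.sub_apply, Matrix.sum_apply, Matrix.mul_apply,
        Matrix.of_apply, hmulsum]
    calc ∑ f : Fin c → Fin n, W f * (frob (D f))^2
        = ∑ f : Fin c → Fin n, ∑ i, ∑ l, W f * (D f i l)^2 := by
          refine Finset.sum_congr rfl fun f _ => ?_
          rw [hfro2 f]
          simp only [Finset.mul_sum]
      _ = ∑ i, ∑ l, ∑ f : Fin c → Fin n, W f * (D f i l)^2 := by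
          rw [Finset.sum_comm]
          exact Finset.sum_congr rfl fun i _ => Finset.sum_comm
      _ ≤ ∑ i, ∑ l, (c:ℝ) * ∑ j, pr j * (((c:ℝ) * pr j)⁻¹ * (A i j * B j l))^2 := by
          refine Finset.sum_le_sum fun i _ => Finset.sum_le_sum fun l _ => ?_
          have := exp_err (c := c) hsum (fun j => ((c:ℝ) * pr j)⁻¹ * (A i j * B j l))
          refine le_trans (le_of_eq ?_) this
          refine Finset.sum_congr rfl fun f _ => ?_
          rw [hentry f i l]
      _ = ∑ i, ∑ l, ∑ j, (A i j)^2 * (B j l)^2 / ((c:ℝ) * pr j) := by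
          refine Finset.sum_congr rfl fun i _ => Finset.sum_congr rfl fun l _ => ?_
          rw [Finset.mul_sum]
          refine Finset.sum_congr rfl fun j _ => ?_
          have h1 : pr j ≠ 0 := (hpos j).ne'
          field_simp
      _ = ∑ i, ∑ j, ∑ l, (A i j)^2 * (B j l)^2 / ((c:ℝ) * pr j) :=
          Finset.sum_congr rfl fun i _ => Finset.sum_comm
      _ = ∑ j, ∑ i, ∑ l, (A i j)^2 * (B j l)^2 / ((c:ℝ) * pr j) := Finset.sum_comm
      _ = ∑ j, (sa j * sb j)^2 / ((c:ℝ) * pr j) := by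
          refine Finset.sum_congr rfl fun j _ => ?_
          have e1 : (sa j * sb j)^2 = (∑ i, (A i j)^2) * (∑ l, (B j l)^2) := by
            rw [mul_pow, hsadef, hsbdef, Real.sq_sqrt (by positivity),
              Real.sq_sqrt (by positivity)]
          rw [e1, Finset.sum_mul_sum]
          simp only [Finset.sum_div]
  -- Step C : probability lower bound
  have EC : ∑ j, (sa j * sb j)^2 / ((c:ℝ) * pr j) ≤ S^2 / (β * c) := by
    have key : ∀ j, (sa j * sb j)^2 / ((c:ℝ) * pr j) ≤ (sa j * sb j) * S / (β * c) := by
      intro j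
      by_cases hz : sa j * sb j = 0
      · simp [hz]
      · have hzpos : 0 < sa j * sb j :=
          lt_of_le_of_ne (mul_nonneg (hsa0 j) (hsb0 j)) (Ne.symm hz)
        have hSpos : 0 < S :=
          lt_of_lt_of_le hzpos (Finset.single_le_sum
            (fun j' _ => mul_nonneg (hsa0 j') (hsb0 j')) (Finset.mem_univ j))
        have hsaj : sa j ≠ 0 := fun h => hz (by rw [h, zero_mul])
        have hsbj : sb j ≠ 0 := fun h => hz (by rw [h, mul_zero])
        have hA : ∃ i, A i j ≠ 0 := by
          by_contra hcon
          push_neg at hcon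
          exact hsaj (by simp [hsadef, hcon])
        have hB : ∃ l, B j l ≠ 0 := by
          by_contra hcon
          push_neg at hcon
          exact hsbj (by simp [hsbdef, hcon])
        obtain ⟨i0, hi0⟩ := hA
        obtain ⟨l0, hl0⟩ := hB
        have hpr : β * (sa j * sb j) / S ≤ pr j := hp j ⟨i0, l0, mul_ne_zero hi0 hl0⟩
        have hq : 0 < β * (sa j * sb j) / S := div_pos (mul_pos hβ0 hzpos) hSpos
        calc (sa j * sb j)^2 / ((c:ℝ) * pr j)
            ≤ (sa j * sb j)^2 / ((c:ℝ) * (β * (sa j * sb j) / S)) := by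
              refine div_le_div_of_nonneg_left (sq_nonneg _) (mul_pos hc0 hq) ?_
              exact mul_le_mul_of_nonneg_left hpr (le_of_lt hc0)
          _ = (sa j * sb j) * S / (β * c) := by
              rw [div_eq_div_iff (mul_pos hc0 hq).ne' (mul_pos hβ0 hc0).ne']
              field_simp
    calc ∑ j, (sa j * sb j)^2 / ((c:ℝ) * pr j)
        ≤ ∑ j, (sa j * sb j) * S / (β * c) := Finset.sum_le_sum fun j _ => key j
      _ = S^2 / (β * c) := by
          rw [← Finset.sum_div, ← Finset.sum_mul, ← hSdef, sq]
  -- Cauchy-Schwarz : S ≤ frob A * frob B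
  have hCS : S ≤ frob A * frob B := by
    have h1 : S^2 ≤ (∑ j, sa j ^2) * (∑ j, sb j ^2) :=
      Finset.sum_mul_sq_le_sq_mul_sq Finset.univ sa sb
    have hA2 : ∑ j, sa j ^2 = (frob A)^2 := by
      rw [frob, Real.sq_sqrt (by positivity), Finset.sum_comm]
      exact Finset.sum_congr rfl fun j _ => Real.sq_sqrt (by positivity)
    have hB2 : ∑ j, sb j ^2 = (frob B)^2 := by
      rw [frob, Real.sq_sqrt (by positivity)]
      exact Finset.sum_congr rfl fun j _ => Real.sq_sqrt (by positivity)
    have hS0 : 0 ≤ S := Finset.sum_nonneg fun j _ => mul_nonneg (hsa0 j) (hsb0 j)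
    have h2 : S^2 ≤ (frob A * frob B)^2 := by
      rw [mul_pow]
      rw [hA2, hB2] at h1
      exact h1
    calc S = Real.sqrt (S^2) := (Real.sqrt_sq hS0).symm
      _ ≤ Real.sqrt ((frob A * frob B)^2) := Real.sqrt_le_sqrt h2
      _ = frob A * frob B := Real.sqrt_sq (mul_nonneg (Real.sqrt_nonneg _) (Real.sqrt_nonneg _))
  -- Jensen
  have jensen : (∑ f : Fin c → Fin n, W f * frob (D f))^2
      ≤ ∑ f : Fin c → Fin n, W f * (frob (D f))^2 := by
    have hcs := Finset.sum_mul_sq_le_sq_mul_sq Finset.univ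
      (fun f : Fin c → Fin n => Real.sqrt (W f))
      (fun f : Fin c → Fin n => Real.sqrt (W f) * frob (D f))
    have e1 : ∀ f : Fin c → Fin n,
        Real.sqrt (W f) * (Real.sqrt (W f) * frob (D f)) = W f * frob (D f) := fun f => by
      rw [← mul_assoc, Real.mul_self_sqrt (hW0 f)]
    have e2 : ∀ f : Fin c → Fin n, Real.sqrt (W f) ^2 = W f := fun f => Real.sq_sqrt (hW0 f)
    have e3 : ∀ f : Fin c → Fin n,
        (Real.sqrt (W f) * frob (D f))^2 = W f * (frob (D f))^2 := fun f => by
      rw [mul_pow, e2]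
    rw [Finset.sum_congr rfl (fun f _ => e1 f), Finset.sum_congr rfl (fun f _ => e2 f),
      Finset.sum_congr rfl (fun f _ => e3 f), hsumW, one_mul] at hcs
    exact hcs
  -- Conclusion
  have hEx0 : 0 ≤ ∑ f : Fin c → Fin n, W f * frob (D f) :=
    Finset.sum_nonneg fun f _ => mul_nonneg (hW0 f) (Real.sqrt_nonneg _)
  have hfAB0 : 0 ≤ frob A * frob B := mul_nonneg (Real.sqrt_nonneg _) (Real.sqrt_nonneg _)
  have hS0 : 0 ≤ S := Finset.sum_nonneg fun j _ => mul_nonneg (hsa0 j) (hsb0 j)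
  have hfin : (∑ f : Fin c → Fin n, W f * frob (D f))^2 ≤ (frob A * frob B)^2 / (β * c) := by
    refine le_trans jensen (le_trans EB (le_trans EC ?_))
    exact div_le_div_of_nonneg_right (pow_le_pow_left₀ hS0 hCS 2) (by positivity)
  calc ∑ f : Fin c → Fin n, W f * frob (D f)
      = Real.sqrt ((∑ f : Fin c → Fin n, W f * frob (D f))^2) := (Real.sqrt_sq hEx0).symm
    _ ≤ Real.sqrt ((frob A * frob B)^2 / (β * c)) := Real.sqrt_le_sqrt hfin
    _ = frob A * frob B / Real.sqrt (β * c) := by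
        rw [Real.sqrt_div (sq_nonneg _), Real.sqrt_sq hfAB0]
end

section
/- Let A ∈ ℝ^{m×n}, let k ≤ rank(A), let P = U_k U_k^T be the orthogonal projection onto the span of the top k left singular vectors of A, and let C ∈ ℝ^{m×c} be any matrix. Then ‖A - CC⁺A‖_F ≤ ‖A - C(PC)⁺PA‖_F, and moreover the matrix C(PC)⁺PA has rank at most k. -/
open Matrix BigOperators

lemma cross_sum_eq_trace {m n : ℕ} (R : Matrix (Fin m) (Fin n) ℝ)
    (B : Matrix (Fin m) (Fin n) ℝ) :
    ∑ i, ∑ j, R i j * B i j = Matrix.trace (Bᵀ * R) := by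
  rw [Matrix.trace]
  simp only [Matrix.diag, Matrix.mul_apply, Matrix.transpose_apply]
  rw [Finset.sum_comm]
  congr 1; ext i; congr 1; ext j; ring

lemma pythagoras_sum {m n c : ℕ} (R : Matrix (Fin m) (Fin n) ℝ)
    (C : Matrix (Fin m) (Fin c) ℝ) (D : Matrix (Fin c) (Fin n) ℝ)
    (h : Cᵀ * R = 0) :
    ∑ i, ∑ j, (R i j)^2 ≤ ∑ i, ∑ j, ((R + C * D) i j)^2 := by
  have hcross : ∑ i, ∑ j, R i j * (C * D) i j = 0 := by
    rw [cross_sum_eq_trace]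
    have : (C * D)ᵀ * R = 0 := by
      rw [Matrix.transpose_mul, Matrix.mul_assoc, h, Matrix.mul_zero]
    rw [this, Matrix.trace_zero]
  have expand : ∑ i, ∑ j, ((R + C * D) i j)^2
      = ∑ i, ∑ j, (R i j)^2 + 2 * (∑ i, ∑ j, R i j * (C * D) i j)
        + ∑ i, ∑ j, ((C * D) i j)^2 := by
    simp only [Matrix.add_apply, Finset.mul_sum, ← Finset.sum_add_distrib]
    congr 1; ext i; congr 1; ext j; ring
  rw [expand, hcross]
  have : (0:ℝ) ≤ ∑ i, ∑ j, ((C * D) i j)^2 :=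
    Finset.sum_nonneg fun i _ => Finset.sum_nonneg fun j _ => sq_nonneg _
  linarith

/-- Projecting through `P = U_k U_kᵀ` (the projection onto the span of the top `k` left
singular vectors of `A`) before regressing can only increase the residual:
`‖A - CC⁺A‖_F ≤ ‖A - C(PC)⁺PA‖_F`, and `C(PC)⁺PA` has rank at most `k`. -/
theorem projected_regression_bound {m n c k : ℕ}
    (A : Matrix (Fin m) (Fin n) ℝ) (C : Matrix (Fin m) (Fin c) ℝ)
    (Uk : Matrix (Fin m) (Fin k) ℝ) (hUk : Ukᵀ * Uk = 1)
    (hk : k ≤ A.rank)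
    (Cp : Matrix (Fin c) (Fin m) ℝ) (hCp : IsMoorePenrose C Cp)
    (PCp : Matrix (Fin c) (Fin m) ℝ) (hPCp : IsMoorePenrose ((Uk * Ukᵀ) * C) PCp) :
    frob (A - C * (Cp * A)) ≤ frob (A - C * (PCp * ((Uk * Ukᵀ) * A))) ∧
      (C * (PCp * ((Uk * Ukᵀ) * A))).rank ≤ k := by
  obtain ⟨h1, h2, h3, h4⟩ := hCp
  constructor
  · set X : Matrix (Fin c) (Fin n) ℝ := PCp * ((Uk * Ukᵀ) * A) with hXdef
    have key : Cᵀ * (C * Cp) = Cᵀ := by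
      rw [← h3, ← Matrix.transpose_mul, h1]
    have hCtR : Cᵀ * (A - C * (Cp * A)) = 0 := by
      rw [Matrix.mul_sub, ← Matrix.mul_assoc, ← Matrix.mul_assoc,
        Matrix.mul_assoc Cᵀ C Cp, key, sub_self]
    have hdecomp : A - C * X = (A - C * (Cp * A)) + C * (Cp * A - X) := by
      rw [Matrix.mul_sub]; abel
    unfold frob
    apply Real.sqrt_le_sqrt
    rw [hdecomp]
    exact pythagoras_sum _ C _ hCtR
  · have : C * (PCp * ((Uk * Ukᵀ) * A)) = (C * PCp * Uk) * (Ukᵀ * A) := by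
      simp only [Matrix.mul_assoc]
    rw [this]
    calc ((C * PCp * Uk) * (Ukᵀ * A)).rank ≤ (Ukᵀ * A).rank :=
          Matrix.rank_mul_le_right _ _
      _ ≤ Fintype.card (Fin k) := Matrix.rank_le_card_height _
      _ = k := Fintype.card_fin k
end
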